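/- Let h : C → K be a homeomorphism with h(d) = σ(d) for all d ∈ D and h[V_d] = K ∩ W(d) for all d ∈ D, and let f be Kuratowski's function. Suppose g : K⁺ → ℝ satisfies g(z) = f(h⁻¹(z)) for all z ∈ K and g(z) = f(d) for all z ∈ F(d) and all d ∈ D. Then g is continuous at every point of K⁺ \ σ[D]; in particular g is continuous at all points of K \ σ[D] and locally constant on K⁺ \ K. -/

import Mathlib

open Set Topology

/-- The Cantor space `2^ℕ`, with coordinates indexed by the positive integers. -/
abbrev Cant : Type := ℕ+ → Bool

/-- The support of a point of the Cantor space, as a set of (positive) natural numbers. -/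
def ksupp (x : Cant) : Set ℕ := {i | ∃ h : 0 < i, x ⟨i, h⟩ = true}

/-- The plane. -/
abbrev Plane : Type := EuclideanSpace ℝ (Fin 2)

/-- `N_d = max supp d` (with `sSup ∅ = 0` for the zero point). -/
noncomputable def Nd (d : Cant) : ℕ := sSup (ksupp d)

/-- The basic clopen set `V_d = {y : y(i) = d(i) for 1 ≤ i ≤ N_d}`. -/
noncomputable def Vd (d : Cant) : Set Cant :=
  {y | ∀ i : ℕ+, (i : ℕ) ≤ Nd d → y i = d i}

/-- The set `D_d` of children of `d ∈ D`: the points of `D_{k_d+1}` agreeing with `d`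
on the coordinates `1, …, N_d`. -/
noncomputable def Dch (d : Cant) : Set Cant :=
  {e | (ksupp e).Finite ∧ (ksupp e).ncard = (ksupp d).ncard + 1 ∧
    ∀ i : ℕ+, (i : ℕ) ≤ Nd d → e i = d i}

/-- The ball `W(d) = B(σ(d), 2^{−ℓ(d)})`. -/
noncomputable def Wb (σ : Cant → Plane) (ℓ : Cant → ℕ) (d : Cant) : Set Plane :=
  Metric.ball (σ d) ((2 : ℝ) ^ (-(ℓ d : ℤ)))

/-- The ball `U(d) = B(σ(d), 2^{−ℓ(d)−1})`. -/
noncomputable def Ub (σ : Cant → Plane) (ℓ : Cant → ℕ) (d : Cant) : Set Plane :=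
  Metric.ball (σ d) ((2 : ℝ) ^ (-(ℓ d : ℤ) - 1))

/-- The resulting Cantor set `K = ⋂_n cl (⋃ {W(d) : d ∈ D_n})`. -/
noncomputable def Kset (σ : Cant → Plane) (ℓ : Cant → ℕ) : Set Plane :=
  ⋂ n : ℕ, closure (⋃ d ∈ {d : Cant | (ksupp d).Finite ∧ (ksupp d).ncard = n}, Wb σ ℓ d)

/-- The closed set `F(d) = cl U(d) \ ⋃_{e ∈ D_d} W(e)`. -/
noncomputable def Fd (σ : Cant → Plane) (ℓ : Cant → ℕ) (d : Cant) : Set Plane :=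
  closure (Ub σ ℓ d) \ ⋃ e ∈ Dch d, Wb σ ℓ e

/-- The three conditions imposed on the maps `σ : D → ℝ²` and `ℓ : D → ω`:
(1) `⟨σ(e) : e ∈ D_d⟩` converges to `σ(d)` (in the sense that `σ(e)` is close to `σ(d)`
    once the added support element `N_e` of the child `e` is large);
(2) `cl W(e) ⊆ U(d) \ {σ(d)}` whenever `e ∈ D_d`;
(3) `{cl W(d) : d ∈ D_n}` is pairwise disjoint for every `n`. -/
def CantorConds (σ : Cant → Plane) (ℓ : Cant → ℕ) : Prop :=
  (∀ d : Cant, (ksupp d).Finite → ∀ ε > (0 : ℝ), ∃ M : ℕ, ∀ e ∈ Dch d,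
      M ≤ Nd e → dist (σ e) (σ d) < ε) ∧
  (∀ d : Cant, (ksupp d).Finite → ∀ e ∈ Dch d,
      closure (Wb σ ℓ e) ⊆ Ub σ ℓ d \ {σ d}) ∧
  (∀ n : ℕ, ∀ d e : Cant, (ksupp d).Finite → (ksupp d).ncard = n →
      (ksupp e).Finite → (ksupp e).ncard = n → d ≠ e →
      Disjoint (closure (Wb σ ℓ d)) (closure (Wb σ ℓ e)))

open scoped Classical in
/-- Kuratowski's function `f(x) = Σ_j (−1)^{c_x(j)} 2^{−j}`, where `c_x` enumerates the
support of `x` in increasing order; here the summation index `j : ℕ` is the 0-based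
version of the paper's 1-based position index, so the weight is `2^{−(j+1)}`. -/
noncomputable def kf (x : Cant) : ℝ :=
  ∑' j : ℕ, if (ksupp x).Infinite ∨ j < (ksupp x).ncard then
    (-1 : ℝ) ^ (Nat.nth (· ∈ ksupp x) j) * (2 : ℝ) ^ (-(j + 1 : ℤ)) else 0

/-- The set `K⁺ = K ∪ ⋃_{d ∈ D} F(d)`. -/
noncomputable def Kplus (σ : Cant → Plane) (ℓ : Cant → ℕ) : Set Plane :=
  Kset σ ℓ ∪ ⋃ d ∈ {d : Cant | (ksupp d).Finite}, Fd σ ℓ d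


/-!
On `K` the function `g` is `f ∘ h⁻¹`. At `z = h(x)` with `supp x` infinite, the balls `W(d)`
for the finite truncations `d` of `x` are neighbourhoods of `z`, and every point of `K⁺ ∩ W(d)`
carries a value `f(y)` with `y ∈ V_d`: for points of `K` because `h[V_d] = K ∩ W(d)`, for points
of a piece `F(d')` because the nesting and disjointness of the balls force `d' ∈ V_d`. Since `f`
varies by at most `2^{-|d|}` on `V_d`, `g` is continuous at `z`.

A point `z ∈ F(d) \ K` has a neighbourhood missing the closed set `K`. The only pieces `F(d')`
meeting `W(d)` are `F(d)` itself and pieces inside the balls `cl U(c)`, `c ∈ D_d`; these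
accumulate only at `σ(d) ∈ K`, so `g` is constantly `f(d)` near `z`.
-/

section Support

lemma mem_ksupp {x : Cant} {i : ℕ+} : (i : ℕ) ∈ ksupp x ↔ x i = true :=
  ⟨fun ⟨_, hx⟩ => hx, fun hx => ⟨i.2, hx⟩⟩

lemma zero_notMem_ksupp (x : Cant) : 0 ∉ ksupp x := fun h => lt_irrefl 0 h.1

lemma eq_of_ksupp_eq {x y : Cant} (h : ksupp x = ksupp y) : x = y := by
  funext i
  have hi : x i = true ↔ y i = true := by rw [← mem_ksupp, ← mem_ksupp, h]
  cases hx : x i <;> cases hy : y i <;> simp_all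

lemma le_Nd {d : Cant} (hd : (ksupp d).Finite) {i : ℕ} (hi : i ∈ ksupp d) : i ≤ Nd d :=
  le_csSup hd.bddAbove hi

lemma Nd_le {d : Cant} {N : ℕ} (h : ∀ i ∈ ksupp d, i ≤ N) : Nd d ≤ N :=
  csSup_le' h

lemma mem_Vd_self (d : Cant) : d ∈ Vd d := fun _ _ => rfl

lemma mem_Vd_of_mem_Dch {d e : Cant} (he : e ∈ Dch d) : e ∈ Vd d := he.2.2

lemma mem_ksupp_iff_of_mem_Vd {d y : Cant} (hy : y ∈ Vd d) {i : ℕ} (hi : i ≤ Nd d) :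
    i ∈ ksupp y ↔ i ∈ ksupp d := by
  rcases Nat.eq_zero_or_pos i with rfl | hpos
  · exact iff_of_false (zero_notMem_ksupp y) (zero_notMem_ksupp d)
  · lift i to ℕ+ using hpos
    rw [mem_ksupp, mem_ksupp, hy i hi]

lemma ksupp_subset_of_mem_Vd {d y : Cant} (hd : (ksupp d).Finite) (hy : y ∈ Vd d) :
    ksupp d ⊆ ksupp y :=
  fun _ hi => (mem_ksupp_iff_of_mem_Vd hy (le_Nd hd hi)).2 hi

lemma Vd_subset_Vd {d e : Cant} (hd : (ksupp d).Finite) (he : (ksupp e).Finite)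
    (hed : e ∈ Vd d) : Vd e ⊆ Vd d := fun y hy i hi => by
  have hNd : Nd d ≤ Nd e := Nd_le fun j hj => le_Nd he (ksupp_subset_of_mem_Vd hd hed hj)
  rw [hy i (hi.trans hNd), hed i hi]

lemma finite_setOf_Nd_lt (M : ℕ) : {e : Cant | (ksupp e).Finite ∧ Nd e < M}.Finite := by
  refine Set.Finite.of_finite_image ?_ fun x _ y _ hxy => eq_of_ksupp_eq hxy
  refine (Set.finite_Iio M).finite_subsets.subset ?_
  rintro _ ⟨e, ⟨he, heM⟩, rfl⟩ i hi
  exact (le_Nd he hi).trans_lt heM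

end Support

section Ancestors

noncomputable def parent (e : Cant) : Cant := fun i => if (i : ℕ) = Nd e then false else e i

lemma ksupp_parent (e : Cant) : ksupp (parent e) = ksupp e \ {Nd e} := by
  ext i
  rcases Nat.eq_zero_or_pos i with rfl | hpos
  · exact iff_of_false (zero_notMem_ksupp _) fun h => zero_notMem_ksupp _ h.1
  · lift i to ℕ+ using hpos
    simp only [Set.mem_sdiff, Set.mem_singleton_iff, mem_ksupp, parent]
    by_cases hi : (i : ℕ) = Nd e <;> simp [hi]

lemma finite_ksupp_parent {e : Cant} (he : (ksupp e).Finite) : (ksupp (parent e)).Finite := by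
  rw [ksupp_parent]
  exact he.sdiff

lemma ncard_ksupp_parent {e : Cant} (he : (ksupp e).Finite) :
    (ksupp (parent e)).ncard = (ksupp e).ncard - 1 := by
  rw [ksupp_parent]
  rcases (ksupp e).eq_empty_or_nonempty with hemp | hne
  · simp [hemp]
  · exact Set.ncard_sdiff_singleton_of_mem (hne.csSup_mem he)

lemma mem_Vd_parent {e : Cant} (he : (ksupp e).Finite) : e ∈ Vd (parent e) := by
  intro i hi
  have hN : Nd (parent e) ≤ Nd e - 1 := Nd_le fun j hj => by
    rw [ksupp_parent, Set.mem_sdiff, Set.mem_singleton_iff] at hj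
    have := le_Nd he hj.1
    omega
  have hi' : (i : ℕ) ≠ Nd e := by
    have := i.pos
    omega
  simp only [parent, hi', if_false]

lemma mem_Dch_parent {e : Cant} (he : (ksupp e).Finite) (hne : (ksupp e).Nonempty) :
    e ∈ Dch (parent e) := by
  refine ⟨he, ?_, mem_Vd_parent he⟩
  have := (Set.ncard_pos he).2 hne
  rw [ncard_ksupp_parent he]
  omega

noncomputable def ancestor (e : Cant) (k : ℕ) : Cant := parent^[k] e

lemma ancestor_succ (e : Cant) (k : ℕ) : ancestor e (k + 1) = parent (ancestor e k) :=
  Function.iterate_succ_apply' parent k e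

lemma finite_ksupp_ancestor {e : Cant} (he : (ksupp e).Finite) (k : ℕ) :
    (ksupp (ancestor e k)).Finite := by
  induction k with
  | zero => exact he
  | succ k ih => rw [ancestor_succ]; exact finite_ksupp_parent ih

lemma ncard_ksupp_ancestor {e : Cant} (he : (ksupp e).Finite) (k : ℕ) :
    (ksupp (ancestor e k)).ncard = (ksupp e).ncard - k := by
  induction k with
  | zero => rfl
  | succ k ih =>
    rw [ancestor_succ, ncard_ksupp_parent (finite_ksupp_ancestor he k), ih]
    omega

lemma ancestor_mem_Dch {e : Cant} (he : (ksupp e).Finite) {k : ℕ}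
    (hk : k < (ksupp e).ncard) : ancestor e k ∈ Dch (ancestor e (k + 1)) := by
  rw [ancestor_succ]
  refine mem_Dch_parent (finite_ksupp_ancestor he k) (Set.nonempty_of_ncard_ne_zero ?_)
  rw [ncard_ksupp_ancestor he]
  omega

lemma mem_Vd_ancestor {e : Cant} (he : (ksupp e).Finite) (k : ℕ) : e ∈ Vd (ancestor e k) := by
  induction k with
  | zero => exact mem_Vd_self e
  | succ k ih =>
    have hk := finite_ksupp_ancestor he k
    rw [ancestor_succ]
    exact Vd_subset_Vd (finite_ksupp_parent hk) hk (mem_Vd_parent hk) ih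

end Ancestors

section Geometry

variable {σ : Cant → Plane} {ℓ : Cant → ℕ}

lemma Ub_subset_Wb (d : Cant) : Ub σ ℓ d ⊆ Wb σ ℓ d :=
  Metric.ball_subset_ball (zpow_le_zpow_right₀ one_le_two (by omega))

lemma closure_Ub_subset_Wb (d : Cant) : closure (Ub σ ℓ d) ⊆ Wb σ ℓ d :=
  Metric.closure_ball_subset_closedBall.trans
    (Metric.closedBall_subset_ball (zpow_lt_zpow_right₀ one_lt_two (by omega)))

lemma Fd_subset_closure_Ub (d : Cant) : Fd σ ℓ d ⊆ closure (Ub σ ℓ d) := Set.sdiff_subset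

lemma mem_Wb_of_mem_closure_Ub {d : Cant} {z w : Plane} (hz : z ∈ closure (Ub σ ℓ d))
    (hwz : dist w z < (2 : ℝ) ^ (-(ℓ d : ℤ) - 1)) : w ∈ Wb σ ℓ d := by
  have hzd : dist z (σ d) ≤ (2 : ℝ) ^ (-(ℓ d : ℤ) - 1) :=
    Metric.closure_ball_subset_closedBall hz
  have hhalf := zpow_sub_one₀ (two_ne_zero (α := ℝ)) (-(ℓ d : ℤ))
  rw [Wb, Metric.mem_ball]
  linarith [dist_triangle w z (σ d)]

lemma closure_Wb_subset_Ub_of_mem_Dch (hc : CantorConds σ ℓ) {d e : Cant}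
    (hd : (ksupp d).Finite) (he : e ∈ Dch d) : closure (Wb σ ℓ e) ⊆ Ub σ ℓ d :=
  (hc.2.1 d hd e he).trans Set.sdiff_subset

lemma radius_lt_dist_of_mem_Dch (hc : CantorConds σ ℓ) {d e : Cant} (hd : (ksupp d).Finite)
    (he : e ∈ Dch d) : (2 : ℝ) ^ (-(ℓ e : ℤ)) < dist (σ d) (σ e) := by
  have hσd : σ d ∉ closure (Wb σ ℓ e) := fun hmem => (hc.2.1 d hd e he hmem).2 rfl
  rw [Wb, closure_ball _ (by positivity), Metric.mem_closedBall, not_le] at hσd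
  exact hσd

lemma closure_Wb_subset_Ub_ancestor (hc : CantorConds σ ℓ) {e : Cant} (he : (ksupp e).Finite)
    {k : ℕ} (hk : k < (ksupp e).ncard) : closure (Wb σ ℓ e) ⊆ Ub σ ℓ (ancestor e (k + 1)) := by
  induction k with
  | zero =>
    exact closure_Wb_subset_Ub_of_mem_Dch hc (finite_ksupp_ancestor he 1) (ancestor_mem_Dch he hk)
  | succ k ih =>
    refine (ih (by omega)).trans ((Ub_subset_Wb _).trans (subset_closure.trans ?_))
    exact closure_Wb_subset_Ub_of_mem_Dch hc (finite_ksupp_ancestor he _) (ancestor_mem_Dch he hk)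

lemma Wb_subset_Wb_ancestor (hc : CantorConds σ ℓ) {e : Cant} (he : (ksupp e).Finite)
    {k : ℕ} (hk : k ≤ (ksupp e).ncard) : Wb σ ℓ e ⊆ Wb σ ℓ (ancestor e k) := by
  rcases k with _ | k
  · rfl
  · exact subset_closure.trans ((closure_Wb_subset_Ub_ancestor hc he hk).trans (Ub_subset_Wb _))

lemma closure_Ub_subset_closure_Ub_ancestor (hc : CantorConds σ ℓ) {e : Cant}
    (he : (ksupp e).Finite) {k : ℕ} (hk : k ≤ (ksupp e).ncard) :
    closure (Ub σ ℓ e) ⊆ closure (Ub σ ℓ (ancestor e k)) := by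
  rcases k with _ | k
  · rfl
  · exact (closure_Ub_subset_Wb e).trans (subset_closure.trans
      ((closure_Wb_subset_Ub_ancestor hc he hk).trans subset_closure))

/-- Condition (3) at level `|d|`, transported down the tree by the nesting of the balls. -/
lemma ancestor_eq_of_closure_Wb_inter_nonempty (hc : CantorConds σ ℓ) {d e : Cant}
    (hd : (ksupp d).Finite) (he : (ksupp e).Finite) {k : ℕ}
    (hk : (ksupp e).ncard = (ksupp d).ncard + k)
    (hde : (closure (Wb σ ℓ d) ∩ closure (Wb σ ℓ e)).Nonempty) : ancestor e k = d := by
  by_contra hne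
  have hsub : closure (Wb σ ℓ e) ⊆ closure (Wb σ ℓ (ancestor e k)) :=
    closure_mono (Wb_subset_Wb_ancestor hc he (by omega))
  refine Set.not_nonempty_iff_eq_empty.2 ?_ hde
  refine Set.disjoint_iff_inter_eq_empty.1 ((hc.2.2 _ d (ancestor e k) hd rfl
    (finite_ksupp_ancestor he k) ?_ (Ne.symm hne)).mono_right hsub)
  rw [ncard_ksupp_ancestor he]
  omega

lemma eq_or_exists_mem_Dch_of_Fd_inter_Wb (hc : CantorConds σ ℓ) {d d' : Cant}
    (hd : (ksupp d).Finite) (hd' : (ksupp d').Finite)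
    (hw : (Fd σ ℓ d' ∩ Wb σ ℓ d).Nonempty) :
    d' = d ∨ ∃ c ∈ Dch d, d' ∈ Vd c ∧ Fd σ ℓ d' ⊆ closure (Ub σ ℓ c) := by
  obtain ⟨w, hwF, hwW⟩ := hw
  have hwW' : w ∈ Wb σ ℓ d' := closure_Ub_subset_Wb d' (Fd_subset_closure_Ub d' hwF)
  rcases le_or_gt (ksupp d).ncard (ksupp d').ncard with hle | hlt
  · obtain ⟨k, hk⟩ := Nat.exists_eq_add_of_le hle
    have hanc := ancestor_eq_of_closure_Wb_inter_nonempty hc hd hd' hk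
      ⟨w, subset_closure hwW, subset_closure hwW'⟩
    rcases k with _ | k
    · exact Or.inl hanc
    · have hc' := ancestor_mem_Dch hd' (k := k) (by omega)
      rw [hanc] at hc'
      exact Or.inr ⟨_, hc', mem_Vd_ancestor hd' k, (Fd_subset_closure_Ub d').trans
        (closure_Ub_subset_closure_Ub_ancestor hc hd' (by omega))⟩
  · obtain ⟨k, hk⟩ := Nat.exists_eq_add_of_lt hlt
    have hanc := ancestor_eq_of_closure_Wb_inter_nonempty hc hd' hd (k := k + 1) hk
      ⟨w, subset_closure hwW', subset_closure hwW⟩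
    have hc' := ancestor_mem_Dch hd (k := k) (by omega)
    rw [hanc] at hc'
    exact absurd (Set.mem_biUnion hc' (Wb_subset_Wb_ancestor hc hd (by omega) hwW)) hwF.2

end Geometry

section LocallyConstant

variable {σ : Cant → Plane} {ℓ : Cant → ℕ}

lemma isClosed_Kset : IsClosed (Kset σ ℓ) :=
  isClosed_iInter fun _ => isClosed_closure

lemma exists_mem_Fd_of_mem_Kplus {w : Plane} (hw : w ∈ Kplus σ ℓ) (hwK : w ∉ Kset σ ℓ) :
    ∃ d : Cant, (ksupp d).Finite ∧ w ∈ Fd σ ℓ d := by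
  simpa [Kplus, hwK] using hw

/-- Near a point `z ≠ σ(d)` outside every `W(c)`, `c ∈ D_d`, only finitely many of the balls
`cl U(c)` need to be avoided: by condition (1) the others lie close to `σ(d)`. -/
lemma exists_pos_le_dist_of_mem_closure_Ub_child (hc : CantorConds σ ℓ) {d : Cant}
    (hd : (ksupp d).Finite) {z : Plane} (hzW : ∀ c ∈ Dch d, z ∉ Wb σ ℓ c) (hzσ : z ≠ σ d) :
    ∃ ε > 0, ∀ c ∈ Dch d, ∀ w ∈ closure (Ub σ ℓ c), ε ≤ dist w z := by
  set δ := dist z (σ d)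
  have hδ : 0 < δ := dist_pos.2 hzσ
  obtain ⟨M, hM⟩ := hc.1 d hd (δ / 4) (by positivity)
  have hsmall : ∀ᶠ ε in 𝓝[>] (0 : ℝ), ε < δ / 2 ∧
      ∀ c ∈ {e : Cant | (ksupp e).Finite ∧ Nd e < M}, ε < (2 : ℝ) ^ (-(ℓ c : ℤ) - 1) :=
    nhdsWithin_le_nhds <| (eventually_lt_nhds (by positivity)).and <|
      (finite_setOf_Nd_lt M).eventually_all.2 fun _ _ => eventually_lt_nhds (by positivity)
  obtain ⟨ε, ⟨hεδ, hεM⟩, hε⟩ := (hsmall.and self_mem_nhdsWithin).exists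
  refine ⟨ε, hε, fun c hcd w hw => le_of_not_gt fun hwz => ?_⟩
  by_cases hcM : Nd c < M
  · refine hzW c hcd (mem_Wb_of_mem_closure_Ub hw ?_)
    rw [dist_comm]
    exact hwz.trans (hεM c ⟨hcd.1, hcM⟩)
  · have hwc : dist w (σ c) ≤ (2 : ℝ) ^ (-(ℓ c : ℤ) - 1) :=
      Metric.closure_ball_subset_closedBall hw
    have hhalf := zpow_sub_one₀ (two_ne_zero (α := ℝ)) (-(ℓ c : ℤ))
    have hrc := radius_lt_dist_of_mem_Dch hc hd hcd
    have hcd' := hM c hcd (not_lt.1 hcM)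
    linarith [dist_triangle4 z w (σ c) (σ d), dist_comm z w, dist_comm (σ d) (σ c)]

lemma exists_pos_forall_dist_lt_eq_of_notMem_Kset (hc : CantorConds σ ℓ)
    (hσK : ∀ d : Cant, (ksupp d).Finite → σ d ∈ Kset σ ℓ) {g : Plane → ℝ}
    (hgF : ∀ d : Cant, (ksupp d).Finite → ∀ z ∈ Fd σ ℓ d, g z = kf d) {z : Plane}
    (hzP : z ∈ Kplus σ ℓ) (hzK : z ∉ Kset σ ℓ) :
    ∃ ε > (0 : ℝ), ∀ w ∈ Kplus σ ℓ, dist w z < ε → g w = g z := by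
  obtain ⟨d, hd, hzF⟩ := exists_mem_Fd_of_mem_Kplus hzP hzK
  obtain ⟨ε₁, hε₁, hK⟩ := Metric.isOpen_iff.1 isClosed_Kset.isOpen_compl z hzK
  obtain ⟨ε₂, hε₂, hchild⟩ := exists_pos_le_dist_of_mem_closure_Ub_child hc hd
    (fun c hc hzc => hzF.2 (Set.mem_biUnion hc hzc)) fun hzσ => hzK (hzσ ▸ hσK d hd)
  refine ⟨min ε₁ (min ε₂ ((2 : ℝ) ^ (-(ℓ d : ℤ) - 1))), by positivity, fun w hwP hwz => ?_⟩
  have hwK : w ∉ Kset σ ℓ := hK (hwz.trans_le (min_le_left _ _))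
  obtain ⟨d', hd', hwF⟩ := exists_mem_Fd_of_mem_Kplus hwP hwK
  have hwW : w ∈ Wb σ ℓ d :=
    mem_Wb_of_mem_closure_Ub hzF.1 (hwz.trans_le ((min_le_right _ _).trans (min_le_right _ _)))
  rcases eq_or_exists_mem_Dch_of_Fd_inter_Wb hc hd hd' ⟨w, hwF, hwW⟩ with rfl | ⟨c, hcd, -, hF⟩
  · rw [hgF _ hd' w hwF, hgF _ hd' z hzF]
  · exact absurd (hchild c hcd w (hF hwF))
      (not_le.2 (hwz.trans_le ((min_le_right _ _).trans (min_le_left _ _))))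

end LocallyConstant

lemma abs_tsum_le_inv_two_pow {u : ℕ → ℝ} {n : ℕ} (hu₀ : ∀ j < n, u j = 0)
    (hu : ∀ j, |u j| ≤ 2⁻¹ ^ (j + 1)) : |∑' j, u j| ≤ 2⁻¹ ^ n := by
  set b : ℕ → ℝ := fun j => 2⁻¹ * if n ≤ j then 2⁻¹ ^ j else 0
  have hb : Summable b := by
    refine Summable.mul_left _ (Summable.of_nonneg_of_le (fun j => ?_) (fun j => ?_)
      (summable_geometric_of_lt_one (by norm_num) (by norm_num : (2⁻¹ : ℝ) < 1)))
    · split_ifs <;> positivity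
    · split_ifs <;> simp
  have hub : ∀ j, ‖u j‖ ≤ b j := fun j => by
    by_cases hj : n ≤ j
    · simpa [b, hj, pow_succ'] using hu j
    · simp [b, hj, hu₀ j (not_le.1 hj)]
  calc |∑' j, u j| ≤ ∑' j, b j := tsum_of_norm_bounded hb.hasSum hub
    _ = 2⁻¹ ^ n := by rw [tsum_mul_left, tsum_geometric_inv_two_ge]; ring

section Kuratowski

open scoped Classical

noncomputable def kfTerm (x : Cant) (j : ℕ) : ℝ :=
  if (ksupp x).Infinite ∨ j < (ksupp x).ncard then
    (-1 : ℝ) ^ (Nat.nth (· ∈ ksupp x) j) * (2 : ℝ) ^ (-(j + 1 : ℤ)) else 0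

lemma kf_eq_tsum_kfTerm (x : Cant) : kf x = ∑' j, kfTerm x j := rfl

lemma abs_kfTerm_le (x : Cant) (j : ℕ) : |kfTerm x j| ≤ 2⁻¹ ^ (j + 1) := by
  have h2 : (2 : ℝ) ^ (-(j + 1 : ℤ)) = 2⁻¹ ^ (j + 1) := by
    rw [zpow_neg, inv_pow, ← zpow_natCast]
    push_cast
    rfl
  unfold kfTerm
  split_ifs
  · rw [abs_mul, abs_pow, abs_neg, abs_one, one_pow, one_mul, h2, abs_of_pos (by positivity)]
  · rw [abs_zero]
    positivity

lemma summable_kfTerm (x : Cant) : Summable (kfTerm x) :=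
  .of_norm_bounded ((summable_geometric_of_lt_one (r := (2⁻¹ : ℝ)) (by norm_num)
    (by norm_num)).mul_left 2⁻¹) fun j => by
      rw [Real.norm_eq_abs, ← pow_succ']
      exact abs_kfTerm_le x j

lemma kfTerm_eq_zero {d : Cant} (hd : (ksupp d).Finite) {j : ℕ} (hj : (ksupp d).ncard ≤ j) :
    kfTerm d j = 0 :=
  if_neg fun h => h.elim (· hd) (by omega)

lemma nth_ksupp_eq_of_mem_Vd {d y : Cant} (hd : (ksupp d).Finite) (hy : y ∈ Vd d) {j : ℕ}
    (hj : j < (ksupp d).ncard) :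
    Nat.nth (· ∈ ksupp y) j = Nat.nth (· ∈ ksupp d) j := by
  have hjd : ∀ hf : (ksupp d).Finite, j < hf.toFinset.card := fun hf => by
    rwa [← Set.ncard_eq_toFinset_card _ hf]
  set m := Nat.nth (· ∈ ksupp d) j
  have hmd : m ∈ ksupp d := Nat.nth_mem_of_lt_card hd (hjd hd)
  have hcount : Nat.count (· ∈ ksupp y) m = Nat.count (· ∈ ksupp d) m := by
    simp only [Nat.count_eq_card_filter_range]
    congr 1
    refine Finset.filter_congr fun i hi => mem_ksupp_iff_of_mem_Vd hy ?_
    exact (Finset.mem_range.1 hi).le.trans (le_Nd hd hmd)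
  have hmy : m ∈ ksupp y := (mem_ksupp_iff_of_mem_Vd hy (le_Nd hd hmd)).2 hmd
  have hcd : Nat.count (· ∈ ksupp d) m = j := Nat.count_nth hjd
  rw [← Nat.nth_count hmy, hcount, hcd]

lemma kfTerm_eq_of_mem_Vd {d y : Cant} (hd : (ksupp d).Finite) (hy : y ∈ Vd d) {j : ℕ}
    (hj : j < (ksupp d).ncard) : kfTerm y j = kfTerm d j := by
  have hyj : (ksupp y).Infinite ∨ j < (ksupp y).ncard := by
    refine (ksupp y).finite_or_infinite.symm.imp_right fun hyf => ?_
    exact hj.trans_le (Set.ncard_le_ncard (ksupp_subset_of_mem_Vd hd hy) hyf)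
  rw [kfTerm, kfTerm, if_pos hyj, if_pos (Or.inr hj), nth_ksupp_eq_of_mem_Vd hd hy hj]

/-- Points of `V_d` share the first `|d|` summands of `kf` with `d`, whose later summands
vanish. -/
lemma abs_kf_sub_kf_le {d y : Cant} (hd : (ksupp d).Finite) (hy : y ∈ Vd d) :
    |kf y - kf d| ≤ 2⁻¹ ^ (ksupp d).ncard := by
  rw [kf_eq_tsum_kfTerm, kf_eq_tsum_kfTerm, ← (summable_kfTerm y).tsum_sub (summable_kfTerm d)]
  refine abs_tsum_le_inv_two_pow (fun j hj => sub_eq_zero.2 (kfTerm_eq_of_mem_Vd hd hy hj))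
    fun j => ?_
  rcases lt_or_ge j (ksupp d).ncard with hj | hj
  · rw [kfTerm_eq_of_mem_Vd hd hy hj, sub_self, abs_zero]
    positivity
  · rw [kfTerm_eq_zero hd hj, sub_zero]
    exact abs_kfTerm_le y j

end Kuratowski

section Truncation

def truncAt (x : Cant) (N : ℕ) : Cant := fun i => x i && decide ((i : ℕ) ≤ N)

lemma ksupp_truncAt (x : Cant) (N : ℕ) : ksupp (truncAt x N) = ksupp x ∩ Set.Iic N := by
  ext i
  rcases Nat.eq_zero_or_pos i with rfl | hpos
  · exact iff_of_false (zero_notMem_ksupp _) fun h => zero_notMem_ksupp _ h.1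
  · lift i to ℕ+ using hpos
    simp [mem_ksupp, truncAt]

lemma mem_Vd_truncAt (x : Cant) (N : ℕ) : x ∈ Vd (truncAt x N) := by
  intro i hi
  have hN : Nd (truncAt x N) ≤ N := Nd_le fun j hj => by
    rw [ksupp_truncAt] at hj
    exact hj.2
  simp [truncAt, hi.trans hN]

lemma exists_mem_Vd_le_ncard {x : Cant} (hx : (ksupp x).Infinite) (m : ℕ) :
    ∃ d : Cant, (ksupp d).Finite ∧ m ≤ (ksupp d).ncard ∧ x ∈ Vd d := by
  obtain ⟨s, hsx, hs, rfl⟩ := hx.exists_subset_ncard_eq m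
  obtain ⟨N, hN⟩ := hs.bddAbove
  have hfin : (ksupp (truncAt x N)).Finite := by
    rw [ksupp_truncAt]
    exact (Set.finite_Iic N).inter_of_right _
  refine ⟨truncAt x N, hfin, Set.ncard_le_ncard ?_ hfin, mem_Vd_truncAt x N⟩
  rw [ksupp_truncAt]
  exact Set.subset_inter hsx hN

end Truncation

section Continuity

variable {σ : Cant → Plane} {ℓ : Cant → ℕ} {h : Cant ≃ₜ Kset σ ℓ}

lemma mem_Wb_of_mem_Vd
    (hV : ∀ d : Cant, (ksupp d).Finite → Subtype.val '' (h '' Vd d) = Kset σ ℓ ∩ Wb σ ℓ d)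
    {d x : Cant} (hd : (ksupp d).Finite) (hx : x ∈ Vd d) : (h x : Plane) ∈ Wb σ ℓ d :=
  ((hV d hd).subset ⟨h x, Set.mem_image_of_mem h hx, rfl⟩).2

lemma symm_mem_Vd_of_mem_Wb
    (hV : ∀ d : Cant, (ksupp d).Finite → Subtype.val '' (h '' Vd d) = Kset σ ℓ ∩ Wb σ ℓ d)
    {d : Cant} (hd : (ksupp d).Finite) {w : Plane} (hwK : w ∈ Kset σ ℓ) (hwW : w ∈ Wb σ ℓ d) :
    h.symm ⟨w, hwK⟩ ∈ Vd d := by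
  obtain ⟨_, ⟨y, hy, rfl⟩, hyw⟩ := (hV d hd).symm.subset ⟨hwK, hwW⟩
  rwa [show (⟨w, hwK⟩ : Kset σ ℓ) = h y from Subtype.ext hyw.symm, h.symm_apply_apply]

lemma exists_mem_Vd_eq_kf (hc : CantorConds σ ℓ)
    (hV : ∀ d : Cant, (ksupp d).Finite → Subtype.val '' (h '' Vd d) = Kset σ ℓ ∩ Wb σ ℓ d)
    {g : Plane → ℝ} (hgK : ∀ z : Plane, ∀ hz : z ∈ Kset σ ℓ, g z = kf (h.symm ⟨z, hz⟩))
    (hgF : ∀ d : Cant, (ksupp d).Finite → ∀ z ∈ Fd σ ℓ d, g z = kf d)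
    {d : Cant} (hd : (ksupp d).Finite) {w : Plane} (hwP : w ∈ Kplus σ ℓ)
    (hwW : w ∈ Wb σ ℓ d) : ∃ y ∈ Vd d, g w = kf y := by
  by_cases hwK : w ∈ Kset σ ℓ
  · exact ⟨_, symm_mem_Vd_of_mem_Wb hV hd hwK hwW, hgK w hwK⟩
  obtain ⟨d', hd', hwF⟩ := exists_mem_Fd_of_mem_Kplus hwP hwK
  refine ⟨d', ?_, hgF d' hd' w hwF⟩
  rcases eq_or_exists_mem_Dch_of_Fd_inter_Wb hc hd hd' ⟨w, hwF, hwW⟩ with rfl | ⟨c, hcd, hd'c, -⟩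
  · exact mem_Vd_self d'
  · exact Vd_subset_Vd hd hcd.1 (mem_Vd_of_mem_Dch hcd) hd'c

lemma continuousWithinAt_of_mem_Kset (hc : CantorConds σ ℓ)
    (hV : ∀ d : Cant, (ksupp d).Finite → Subtype.val '' (h '' Vd d) = Kset σ ℓ ∩ Wb σ ℓ d)
    {g : Plane → ℝ} (hgK : ∀ z : Plane, ∀ hz : z ∈ Kset σ ℓ, g z = kf (h.symm ⟨z, hz⟩))
    (hgF : ∀ d : Cant, (ksupp d).Finite → ∀ z ∈ Fd σ ℓ d, g z = kf d)
    {z : Plane} (hzK : z ∈ Kset σ ℓ) (hx : (ksupp (h.symm ⟨z, hzK⟩)).Infinite) :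
    ContinuousWithinAt g (Kplus σ ℓ) z := by
  set x := h.symm ⟨z, hzK⟩
  rw [ContinuousWithinAt, Metric.tendsto_nhds]
  intro ε hε
  obtain ⟨m, hm⟩ := exists_pow_lt_of_lt_one (half_pos hε) (by norm_num : (2⁻¹ : ℝ) < 1)
  obtain ⟨d, hd, hmd, hxd⟩ := exists_mem_Vd_le_ncard hx m
  have hclose : ∀ y ∈ Vd d, |kf y - kf d| < ε / 2 := fun y hy =>
    ((abs_kf_sub_kf_le hd hy).trans (pow_le_pow_of_le_one (by norm_num) (by norm_num) hmd)).trans_lt hm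
  have hzW : z ∈ Wb σ ℓ d := by
    simpa [x] using mem_Wb_of_mem_Vd hV hd hxd
  filter_upwards [self_mem_nhdsWithin,
    mem_nhdsWithin_of_mem_nhds (Metric.isOpen_ball.mem_nhds hzW)] with w hwP hwW
  obtain ⟨y, hyd, hgw⟩ := exists_mem_Vd_eq_kf hc hV hgK hgF hd hwP hwW
  rw [Real.dist_eq, hgw, hgK z hzK]
  linarith [abs_sub_le (kf y) (kf d) (kf x), abs_sub_comm (kf d) (kf x), hclose y hyd,
    hclose x hxd]

end Continuity

/-- Let `h : C → K` be a homeomorphism with `h(d) = σ(d)` and `h[V_d] = K ∩ W(d)` for all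
`d ∈ D`, and let `f` be Kuratowski's function.  If `g : K⁺ → ℝ` satisfies
`g(z) = f(h⁻¹(z))` on `K` and `g ≡ f(d)` on each `F(d)`, then `g` is continuous (as a
function on the subspace `K⁺`) at every point of `K⁺ \ σ[D]`; in particular it is
continuous at all points of `K \ σ[D]` and locally constant on `K⁺ \ K`. -/
theorem extended_kf_continuous_off_sigmaD (σ : Cant → Plane) (ℓ : Cant → ℕ)
    (hc : CantorConds σ ℓ) (h : Cant ≃ₜ (Kset σ ℓ))
    (hσ : ∀ d : Cant, (ksupp d).Finite → (h d : Plane) = σ d)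
    (hV : ∀ d : Cant, (ksupp d).Finite →
      Subtype.val '' (h '' Vd d) = Kset σ ℓ ∩ Wb σ ℓ d)
    (g : Plane → ℝ)
    (hgK : ∀ z : Plane, ∀ hz : z ∈ Kset σ ℓ, g z = kf (h.symm ⟨z, hz⟩))
    (hgF : ∀ d : Cant, (ksupp d).Finite → ∀ z ∈ Fd σ ℓ d, g z = kf d) :
    (∀ z ∈ Kplus σ ℓ \ σ '' {d : Cant | (ksupp d).Finite},
        ContinuousWithinAt g (Kplus σ ℓ) z) ∧
      ∀ z ∈ Kplus σ ℓ \ Kset σ ℓ, ∃ ε > (0 : ℝ),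
        ∀ w ∈ Kplus σ ℓ, dist w z < ε → g w = g z := by
  have hσK : ∀ d : Cant, (ksupp d).Finite → σ d ∈ Kset σ ℓ := fun d hd => hσ d hd ▸ (h d).2
  have hloc : ∀ z ∈ Kplus σ ℓ \ Kset σ ℓ, ∃ ε > (0 : ℝ),
      ∀ w ∈ Kplus σ ℓ, dist w z < ε → g w = g z := fun z hz =>
    exists_pos_forall_dist_lt_eq_of_notMem_Kset hc hσK hgF hz.1 hz.2
  refine ⟨fun z ⟨hzP, hzσ⟩ => ?_, hloc⟩
  by_cases hzK : z ∈ Kset σ ℓ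
  · refine continuousWithinAt_of_mem_Kset hc hV hgK hgF hzK fun hfin => hzσ ⟨_, hfin, ?_⟩
    rw [← hσ _ hfin, h.apply_symm_apply]
  · obtain ⟨ε, hε, hconst⟩ := hloc z ⟨hzP, hzK⟩
    refine continuousWithinAt_const.congr_of_eventuallyEq ?_ rfl
    filter_upwards [self_mem_nhdsWithin, mem_nhdsWithin_of_mem_nhds (Metric.ball_mem_nhds z hε)]
      with w hwP hwz using hconst w hwP hwz
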